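/- arXiv:2605.23265 — 7 statements merged into one kernel-verified Lean document; each statement's English description precedes it below -/
import Mathlib

section
/- For any two permutations π, σ of {1,...,d}, the Kendall-tau distance is at most the Spearman footrule distance: κ(π,σ) ≤ F(π,σ), where κ(π,σ) counts the pairs {i,j} on which π and σ disagree in relative order. -/
/-!
Order each discordant pair (i, j) so that π i < π j and σ j < σ i, and charge it to the
half-open gap (min (π x) (σ x), max (π x) (σ x)] of one of its elements x: to the value π j in
the gap of i when π j ≤ σ i, and otherwise to the value σ i, which then lies in the gap of j.
This charging is injective, and the gap of x holds exactly |π x - σ x| values.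
-/

/-- The Kendall-tau distance: the number of pairs {i,j} (with i < j) on which the
two permutations disagree in relative order. -/
def kendallTau {d : ℕ} (π σ : Equiv.Perm (Fin d)) : ℕ :=
  (Finset.univ.filter (fun p : Fin d × Fin d => p.1 < p.2 ∧
    ((π p.1 < π p.2 ∧ σ p.2 < σ p.1) ∨ (π p.2 < π p.1 ∧ σ p.1 < σ p.2)))).card

open Finset

section
variable {ι β : Type*} [Fintype ι] [LinearOrder β]

def discordantPairs (f g : ι → β) : Finset (ι × ι) :=
  univ.filter fun p => f p.1 < f p.2 ∧ g p.2 < g p.1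

theorem card_discordantPairs_le_sum_card_Ioc [LocallyFiniteOrder β] {f g : ι → β}
    (hf : Function.Injective f) (hg : Function.Injective g) :
    #(discordantPairs f g) ≤ ∑ x, #(Ioc (min (f x) (g x)) (max (f x) (g x))) := by
  rw [← card_sigma]
  refine card_le_card_of_injOn
    (fun p => if f p.2 ≤ g p.1 then ⟨p.1, f p.2⟩ else ⟨p.2, g p.1⟩) ?_ ?_
  · rintro ⟨i, j⟩ hij
    simp only [discordantPairs, coe_filter, mem_univ, true_and, Set.mem_ofPred_eq] at hij
    obtain ⟨hf_lt, hg_lt⟩ := hij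
    simp only [coe_sigma, Set.mem_sigma_iff, coe_univ, Set.mem_univ, true_and, mem_coe]
    split_ifs with h
    · exact Ioc_subset_Ioc (min_le_left _ _) (le_max_right _ _) (mem_Ioc.2 ⟨hf_lt, h⟩)
    · exact Ioc_subset_Ioc (min_le_right _ _) (le_max_left _ _)
        (mem_Ioc.2 ⟨hg_lt, (not_le.1 h).le⟩)
  · rintro ⟨i, j⟩ hij ⟨i', j'⟩ hij' hpq
    simp only [discordantPairs, coe_filter, mem_univ, true_and, Set.mem_ofPred_eq] at hij hij'
    simp only at hpq
    split_ifs at hpq with h h' h' <;> simp only [Sigma.mk.injEq, heq_eq_eq] at hpq <;>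
      obtain ⟨rfl, hval⟩ := hpq
    · rw [hf hval]
    · order
    · order
    · rw [hg hval]
end

theorem kendallTau_eq_card_discordantPairs {d : ℕ} (π σ : Equiv.Perm (Fin d)) :
    kendallTau π σ = #(discordantPairs π σ) := by
  refine card_nbij' (fun p => if π p.1 < π p.2 then p else p.swap)
    (fun p => if p.1 < p.2 then p else p.swap) ?_ ?_ ?_ ?_ <;>
    rintro ⟨i, j⟩ hij <;>
    simp only [discordantPairs, coe_filter, mem_univ, true_and, Set.mem_ofPred_eq] at hij ⊢ <;>
    grind

theorem Fin.natCast_card_Ioc_min_max {n : ℕ} (a b : Fin n) :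
    (#(Ioc (min a b) (max a b)) : ℤ) = |(a : ℤ) - b| := by
  rw [Fin.card_Ioc]
  rcases le_total a b with h | h
  · rw [min_eq_left h, max_eq_right h, Nat.cast_sub (Fin.le_iff_val_le_val.1 h),
      abs_sub_comm, abs_of_nonneg (by simpa using h)]
  · rw [min_eq_right h, max_eq_left h, Nat.cast_sub (Fin.le_iff_val_le_val.1 h),
      abs_of_nonneg (by simpa using h)]

theorem stmt_4 (d : ℕ) (π σ : Equiv.Perm (Fin d)) :
    (kendallTau π σ : ℤ) ≤ ∑ i : Fin d, |(π i : ℤ) - (σ i : ℤ)| := by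
  simp_rw [kendallTau_eq_card_discordantPairs, ← Fin.natCast_card_Ioc_min_max]
  exact_mod_cast card_discordantPairs_le_sum_card_Ioc π.injective σ.injective
end

section
/- For any two permutations π, σ of {1,...,d}, the Spearman footrule distance is at most twice the Kendall-tau distance: F(π,σ) ≤ 2·κ(π,σ). -/
open Finset Function

theorem sum_card_filter_eq_card_filter_prod {α : Type*} [Fintype α] (r : α → α → Prop)
    [DecidableRel r] : ∑ i, #{j | r i j} = #{p : α × α | r p.1 p.2} := by
  simp only [card_filter]
  rw [← univ_product_univ, sum_product]

theorem card_filter_prod_eq_two_mul_card_filter_lt {α : Type*} [Fintype α] [LinearOrder α]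
    (r : α → α → Prop) [DecidableRel r] [Std.Symm r] [Std.Irrefl r] :
    #{p : α × α | r p.1 p.2} = 2 * #{p : α × α | p.1 < p.2 ∧ r p.1 p.2} := by
  have hswap : #{p : α × α | r p.1 p.2 ∧ ¬p.1 < p.2} = #{p : α × α | p.1 < p.2 ∧ r p.1 p.2} :=
    card_equiv (Equiv.prodComm α α) fun p => by
      simp only [mem_filter, mem_univ, true_and, Equiv.prodComm_apply, Prod.fst_swap,
        Prod.snd_swap, not_lt, Std.Symm.iff (r := r) p.1 p.2]
      exact ⟨fun h => ⟨h.2.lt_of_ne fun e => irrefl_of r p.1 (e ▸ h.1), h.1⟩,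
        fun h => ⟨h.2, h.1.le⟩⟩
  rw [← card_filter_add_card_filter_not (fun p : α × α => p.1 < p.2), filter_filter,
    filter_filter, hswap, two_mul]
  simp only [and_comm]

section Discordance

variable {α β : Type*} [LinearOrder β]

def Discordant (f g : α → β) (i j : α) : Prop :=
  (f i < f j ∧ g j < g i) ∨ (f j < f i ∧ g i < g j)

instance (f g : α → β) : DecidableRel (Discordant f g) := fun _ _ => by
  unfold Discordant; infer_instance

instance (f g : α → β) : Std.Symm (Discordant f g) where
  symm _ _ := by unfold Discordant; tauto

instance (f g : α → β) : Std.Irrefl (Discordant f g) where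
  irrefl _ := by simp [Discordant]

theorem discordant_comm {f g : α → β} {i j : α} : Discordant g f i j ↔ Discordant f g i j := by
  unfold Discordant; tauto

theorem card_filter_lt_le_add_card_discordant [Fintype α] {f g : α → β}
    (hg : Injective g) (i : α) :
    #{j | f j < f i} ≤ #{j | g j < g i} + #{j | Discordant f g i j} := by
  classical
  set A : Finset α := {j | f j < f i}
  set B : Finset α := {j | g j < g i}
  set D : Finset α := {j | Discordant f g i j}
  have hsdiff : A \ B ⊆ D := by
    intro j hj
    simp only [A, B, D, mem_sdiff, mem_filter, mem_univ, true_and, not_lt] at hj ⊢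
    refine Or.inr ⟨hj.1, hj.2.lt_of_ne fun h => ?_⟩
    rw [hg h] at hj
    exact hj.1.false
  calc #A ≤ #(A \ B) + #B := card_le_card_sdiff_add_card
    _ ≤ #D + #B := by gcongr
    _ = #B + #D := Nat.add_comm _ _

end Discordance

theorem Equiv.Perm.card_filter_apply_lt {d : ℕ} (τ : Equiv.Perm (Fin d)) (i : Fin d) :
    #{j | τ j < τ i} = τ i := by
  rw [card_equiv τ (t := {v | v < τ i}) (by simp), filter_gt_eq_Iio, Fin.card_Iio]

theorem abs_sub_le_card_discordant {d : ℕ} (π σ : Equiv.Perm (Fin d)) (i : Fin d) :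
    |(π i : ℤ) - σ i| ≤ #{j | Discordant π σ i j} := by
  have hπ := card_filter_lt_le_add_card_discordant (f := π) σ.injective i
  have hσ := card_filter_lt_le_add_card_discordant (f := σ) π.injective i
  simp only [discordant_comm, Equiv.Perm.card_filter_apply_lt] at hπ hσ
  rw [abs_sub_le_iff]
  omega

theorem kendallTau_eq_card_discordant {d : ℕ} (π σ : Equiv.Perm (Fin d)) :
    kendallTau π σ = #{p : Fin d × Fin d | p.1 < p.2 ∧ Discordant π σ p.1 p.2} :=
  rfl

theorem stmt_5 (d : ℕ) (π σ : Equiv.Perm (Fin d)) :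
    ∑ i : Fin d, |(π i : ℤ) - (σ i : ℤ)| ≤ 2 * (kendallTau π σ : ℤ) := by
  calc ∑ i, |(π i : ℤ) - σ i|
      ≤ ∑ i, (#{j | Discordant π σ i j} : ℤ) :=
        sum_le_sum fun i _ => abs_sub_le_card_discordant π σ i
    _ = 2 * (kendallTau π σ : ℤ) := by
      rw [← Nat.cast_sum, sum_card_filter_eq_card_filter_prod,
        card_filter_prod_eq_two_mul_card_filter_lt, kendallTau_eq_card_discordant]
      push_cast
      rfl
end

section
/- Let (X,ρ) be a metric space, S ⊆ X a finite multiset, and 𝒫 ⊆ X a nonempty subset. For each π ∈ S let f(π) ∈ 𝒫 be a point of 𝒫 closest to π. Then the element σ ∈ {f(π) : π ∈ S} minimizing ∑_{π'∈S} ρ(π', σ) satisfies ∑_{π'∈S} ρ(π', σ) ≤ 3 · min_{τ∈𝒫} ∑_{π'∈S} ρ(π', τ). -/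
/-!
Fix `τ ∈ P` and pick `π₀ ∈ S` nearest to `τ`, so that `|S| · ρ(π₀, τ) ≤ OPT := ∑_{π' ∈ S} ρ(π', τ)`.
Since `f π₀` is at least as close to `π₀` as `τ` is, `ρ(τ, f π₀) ≤ 2 ρ(π₀, τ)`, and the triangle
inequality bounds the cost of `f π₀` by `OPT + 2 |S| ρ(π₀, τ) ≤ 3 OPT`; the best candidate `σ` costs
no more.
-/

open Multiset

theorem dist_le_dist_add_two_mul_of_dist_le {X : Type*} [PseudoMetricSpace X] {x y z : X}
    (hxy : dist x y ≤ dist x z) (w : X) : dist w y ≤ dist w z + 2 * dist x z := by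
  linarith [dist_triangle w z y, dist_triangle z x y, dist_comm z x]

theorem Multiset.sum_map_dist_le_of_dist_le {X : Type*} [PseudoMetricSpace X] (S : Multiset X)
    {x y z : X} (hxy : dist x y ≤ dist x z) :
    (S.map (dist · y)).sum ≤ (S.map (dist · z)).sum + card S * (2 * dist x z) :=
  calc (S.map (dist · y)).sum ≤ (S.map (fun w => dist w z + 2 * dist x z)).sum :=
        sum_map_le_sum_map _ _ fun w _ => dist_le_dist_add_two_mul_of_dist_le hxy w
    _ = (S.map (dist · z)).sum + card S * (2 * dist x z) := by
        rw [sum_map_add, map_const', sum_replicate, nsmul_eq_mul]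

theorem Multiset.card_mul_le_sum_map_of_forall_le {α R : Type*} [Semiring R] [PartialOrder R]
    [IsOrderedAddMonoid R] (S : Multiset α) (g : α → R)
    {a : α} (ha : ∀ b ∈ S, g a ≤ g b) : card S * g a ≤ (S.map g).sum := by
  simpa using card_nsmul_le_sum (s := S.map g) (a := g a) (by simpa using ha)

theorem stmt_7_general {X : Type*} [MetricSpace X] (S : Multiset X) (P : Set X)
    (f : X → X)
    (hf : ∀ π ∈ S, f π ∈ P ∧ ∀ τ ∈ P, dist π (f π) ≤ dist π τ)
    (σ : X)
    (hmin : ∀ π ∈ S, (S.map (fun π' => dist π' σ)).sum ≤ (S.map (fun π' => dist π' (f π))).sum) :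
    ∀ τ ∈ P, (S.map (fun π' => dist π' σ)).sum ≤ 3 * (S.map (fun π' => dist π' τ)).sum := by
  intro τ hτ
  rcases eq_or_ne S 0 with rfl | hS
  · simp
  obtain ⟨π₀, hπ₀, hnearest⟩ := S.exists_min_image (dist · τ) hS
  have hcard := S.card_mul_le_sum_map_of_forall_le (dist · τ) hnearest
  have hcost := S.sum_map_dist_le_of_dist_le ((hf π₀ hπ₀).2 τ hτ)
  linarith [hmin π₀ hπ₀]

theorem stmt_7 {X : Type*} [MetricSpace X] (S : Multiset X) (P : Set X) (hP : P.Nonempty)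
    (f : X → X)
    (hf : ∀ π ∈ S, f π ∈ P ∧ ∀ τ ∈ P, dist π (f π) ≤ dist π τ)
    (σ : X) (hσ : ∃ π ∈ S, σ = f π)
    (hmin : ∀ π ∈ S, (S.map (fun π' => dist π' σ)).sum ≤ (S.map (fun π' => dist π' (f π))).sum) :
    ∀ τ ∈ P, (S.map (fun π' => dist π' σ)).sum ≤ 3 * (S.map (fun π' => dist π' τ)).sum :=
  stmt_7_general S P f hf σ hmin
end

section
/- Let A be a totally unimodular integer matrix and b an integral vector. Then every vertex (basic feasible solution) of the polyhedron P = {x ∈ ℝ^n : Ax = b, x ≥ 0} has all integer coordinates. -/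
/-!
Let `S` be the support of the vertex `x`. If `A c = 0` for some `c ≠ 0` supported on `S`, then
`x ± ε c` lie in the polyhedron for small `ε > 0` and `x` is their midpoint; so the columns of `A`
indexed by `S` are linearly independent. Choosing a set `R` of `|S|` linearly independent rows
among them gives a nonsingular square submatrix `M = A_{R,S}`, with `M x_S = b_R`. Total
unimodularity forces `det M = ±1`, so `M⁻¹` is integral and `x_S = M⁻¹ b_R` is an integer vector.
-/

open Matrix Function Filter Topology

variable {l m n κ : Type*}

def Matrix.standardFormPolyhedron {R : Type*} [NonUnitalNonAssocSemiring R] [Preorder R]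
    [Fintype n] (A : Matrix m n R) (b : m → R) : Set (n → R) :=
  {x | A *ᵥ x = b ∧ ∀ j, 0 ≤ x j}

theorem eq_zero_of_mem_extremePoints_of_add_mem_of_sub_mem {𝕜 E : Type*} [Field 𝕜]
    [LinearOrder 𝕜] [IsStrictOrderedRing 𝕜] [AddCommGroup E] [Module 𝕜 E] {s : Set E}
    {x v : E} (hx : x ∈ s.extremePoints 𝕜) (hadd : x + v ∈ s) (hsub : x - v ∈ s) : v = 0 := by
  let : Invertible (2 : 𝕜) := invertibleOfNonzero two_ne_zero
  simpa using hx.2 hadd hsub (mem_openSegment_add_sub x v)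

theorem mem_extremePoints_of_forall_eq {𝕜 E : Type*} [Field 𝕜] [LinearOrder 𝕜]
    [IsStrictOrderedRing 𝕜] [AddCommGroup E] [Module 𝕜 E] {s : Set E} {x : E} (hx : x ∈ s)
    (h : ∀ y z, y ∈ s → z ∈ s → ∀ t : 𝕜, 0 < t → t < 1 → x = t • y + (1 - t) • z → y = z) :
    x ∈ s.extremePoints 𝕜 := by
  refine ⟨hx, fun y hy z hz ⟨a, c, ha, hc, hac, hxac⟩ => ?_⟩
  obtain rfl : y = z :=
    h y z hy hz a ha (by linarith) (by rw [← hxac, ← hac, add_sub_cancel_left])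
  rw [← hxac, ← add_smul, hac, one_smul]

theorem Matrix.submatrix_mulVec_comp_of_eq_zero {α : Type*} [NonUnitalNonAssocSemiring α]
    [Fintype n] [Fintype κ] (A : Matrix m n α) (f : l → m) {g : κ → n} (hg : Injective g)
    {v : n → α} (hv : ∀ j ∉ Set.range g, v j = 0) :
    A.submatrix f g *ᵥ (v ∘ g) = (A *ᵥ v) ∘ f := by
  funext i
  exact Fintype.sum_of_injective g hg _ _ (fun j hj => by simp [hv j hj]) fun _ => rfl

theorem eventually_forall_nonneg_add_mul [Finite n] {x c : n → ℝ} (hx : ∀ j, 0 ≤ x j)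
    (hc : ∀ j, x j = 0 → c j = 0) : ∀ᶠ ε in 𝓝 (0 : ℝ), ∀ j, 0 ≤ x j + ε * c j := by
  refine eventually_all.2 fun j => ?_
  rcases (hx j).eq_or_lt with hxj | hxj
  · exact Eventually.of_forall fun ε => by simp [← hxj, hc j hxj.symm]
  · have hlim : Tendsto (fun ε : ℝ => x j + ε * c j) (𝓝 0) (𝓝 (x j)) := by
      simpa using ((tendsto_id (x := 𝓝 (0 : ℝ))).mul_const (c j)).const_add (x j)
    exact (hlim.eventually (lt_mem_nhds hxj)).mono fun _ => le_of_lt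

theorem eq_zero_of_mulVec_eq_zero_of_mem_extremePoints [Fintype n] {A : Matrix m n ℝ}
    {b : m → ℝ} {x c : n → ℝ} (hx : x ∈ (A.standardFormPolyhedron b).extremePoints ℝ)
    (hc : A *ᵥ c = 0) (hsupp : ∀ j, x j = 0 → c j = 0) : c = 0 := by
  have hpert := eventually_forall_nonneg_add_mul hx.1.2 hsupp
  have hpm : ∀ᶠ ε in 𝓝 (0 : ℝ), (∀ j, 0 ≤ x j + ε * c j) ∧ ∀ j, 0 ≤ x j + -ε * c j :=
    hpert.and ((continuous_neg.tendsto' 0 0 neg_zero).eventually hpert)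
  obtain ⟨ε, ⟨hpos, hneg⟩, hε⟩ :=
    ((hpm.filter_mono nhdsWithin_le_nhds).and self_mem_nhdsWithin).exists (f := 𝓝[≠] (0 : ℝ))
  have hmem : ∀ δ : ℝ, (∀ j, 0 ≤ x j + δ * c j) →
      x + δ • c ∈ A.standardFormPolyhedron b := fun δ hδ =>
    ⟨by rw [mulVec_add, mulVec_smul, hc, smul_zero, add_zero, hx.1.1], hδ⟩
  have hεc : ε • c = 0 := eq_zero_of_mem_extremePoints_of_add_mem_of_sub_mem hx
    (hmem ε hpos) (by simpa [sub_eq_add_neg] using hmem (-ε) hneg)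
  exact (smul_eq_zero.mp hεc).resolve_left hε

theorem linearIndependent_col_submatrix_of_mem_extremePoints [Fintype n] [Fintype κ]
    {A : Matrix m n ℝ} {b : m → ℝ} {x : n → ℝ}
    (hx : x ∈ (A.standardFormPolyhedron b).extremePoints ℝ) {g : κ → n} (hg : Injective g)
    (hgx : ∀ k, x (g k) ≠ 0) : LinearIndependent ℝ (A.submatrix id g).col := by
  rw [← mulVec_injective_iff, ← coe_mulVecLin, ← LinearMap.ker_eq_bot, ker_mulVecLin_eq_bot_iff]
  intro c hc
  have hext : ∀ j ∉ Set.range g, extend g c 0 j = 0 := fun j hj => by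
    simp [extend_apply' _ _ _ fun ⟨k, hk⟩ => hj ⟨k, hk⟩]
  have hA : A *ᵥ extend g c 0 = 0 := by
    rw [← comp_id (A *ᵥ _), ← A.submatrix_mulVec_comp_of_eq_zero id hg hext, extend_comp hg, hc]
  have hsupp : ∀ j, x j = 0 → extend g c 0 j = 0 := fun j hj =>
    hext j fun ⟨k, hk⟩ => hgx k (hk ▸ hj)
  simpa [extend_comp hg] using
    congrArg (· ∘ g) (eq_zero_of_mulVec_eq_zero_of_mem_extremePoints hx hA hsupp)

theorem Matrix.exists_injective_isUnit_submatrix_of_linearIndependent_col {K : Type*} [Field K]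
    [Fintype m] [Fintype n] [DecidableEq n] {B : Matrix m n K} (hB : LinearIndependent K B.col) :
    ∃ f : n → m, Injective f ∧ IsUnit (B.submatrix f id) := by
  obtain ⟨ι, a, ha, hspan, hli⟩ := exists_linearIndependent' K B.row
  have := Fintype.ofInjective a ha
  have hcard : Fintype.card n = Fintype.card ι :=
    calc Fintype.card n = Bᵀ.rank := (LinearIndependent.rank_matrix (M := Bᵀ) hB).symm
      _ = (Set.range B.row).finrank K := by rw [rank_transpose, rank_eq_finrank_span_row]; rfl
      _ = (Set.range (B.row ∘ a)).finrank K := by rw [Set.finrank, Set.finrank, hspan]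
      _ = Fintype.card ι := (linearIndependent_iff_card_eq_finrank_span.mp hli).symm
  let e : n ≃ ι := Fintype.equivOfCardEq hcard
  exact ⟨a ∘ e, ha.comp e.injective,
    linearIndependent_rows_iff_isUnit.mp (hli.comp e e.injective)⟩

theorem Matrix.isUnit_det_of_isUnit_map {S : Type*} [CommRing S] [Nontrivial S] [Fintype κ]
    [DecidableEq κ] {M : Matrix κ κ ℤ} (hM : M.det ∈ ({-1, 0, 1} : Set ℤ)) (φ : ℤ →+* S)
    (h : IsUnit (M.map φ)) : IsUnit M.det := by
  have hne : M.det ≠ 0 := fun h0 => by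
    simpa [← RingHom.mapMatrix_apply, ← RingHom.map_det, h0] using (isUnit_iff_isUnit_det _).mp h
  simp only [Set.mem_insert_iff, Set.mem_singleton_iff] at hM
  rw [Int.isUnit_iff]
  omega

theorem Matrix.eq_comp_nonsing_inv_mulVec_of_map_mulVec_eq {R S : Type*} [CommRing R]
    [CommRing S] [Fintype κ] [DecidableEq κ] (φ : R →+* S) {M : Matrix κ κ R}
    (hM : IsUnit M.det) {y : κ → S} {v : κ → R} (h : M.map φ *ᵥ y = φ ∘ v) :
    y = φ ∘ (M⁻¹ *ᵥ v) :=
  calc y = (M⁻¹ * M).map φ *ᵥ y := by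
        rw [nonsing_inv_mul _ hM, Matrix.map_one _ φ.map_zero φ.map_one, one_mulVec]
    _ = M⁻¹.map φ *ᵥ (M.map φ *ᵥ y) := by rw [Matrix.map_mul, mulVec_mulVec]
    _ = φ ∘ (M⁻¹ *ᵥ v) := by rw [h]; funext i; exact (RingHom.map_mulVec φ _ v i).symm

theorem stmt_8 {m n : ℕ} (A : Matrix (Fin m) (Fin n) ℤ)
    (hTU : ∀ (t : ℕ) (f : Fin t → Fin m) (g : Fin t → Fin n),
      Function.Injective f → Function.Injective g →
      (A.submatrix f g).det ∈ ({-1, 0, 1} : Set ℤ))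
    (b : Fin m → ℤ) (x : Fin n → ℝ)
    (hxP : (A.map (Int.cast : ℤ → ℝ)).mulVec x = (fun i => (b i : ℝ)) ∧ ∀ j, 0 ≤ x j)
    (hvert : ∀ y z : Fin n → ℝ,
      ((A.map (Int.cast : ℤ → ℝ)).mulVec y = (fun i => (b i : ℝ)) ∧ ∀ j, 0 ≤ y j) →
      ((A.map (Int.cast : ℤ → ℝ)).mulVec z = (fun i => (b i : ℝ)) ∧ ∀ j, 0 ≤ z j) →
      ∀ t : ℝ, 0 < t → t < 1 → (x = fun j => t * y j + (1 - t) * z j) → y = z) :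
    ∀ j, ∃ q : ℤ, x j = (q : ℝ) := by
  classical
  let A' : Matrix (Fin m) (Fin n) ℝ := A.map (Int.castRingHom ℝ)
  have hext : x ∈ (A'.standardFormPolyhedron (Int.castRingHom ℝ ∘ b)).extremePoints ℝ :=
    mem_extremePoints_of_forall_eq hxP hvert
  let e := (Fintype.equivFin {j // x j ≠ 0}).symm
  let g : Fin _ → Fin n := Subtype.val ∘ e
  have hg : Injective g := Subtype.val_injective.comp e.injective
  obtain ⟨f, hf, hunit⟩ := exists_injective_isUnit_submatrix_of_linearIndependent_col
    (linearIndependent_col_submatrix_of_mem_extremePoints hext hg fun k => (e k).2)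
  have hdet : IsUnit (A.submatrix f g).det :=
    isUnit_det_of_isUnit_map (hTU _ f g hf hg) (Int.castRingHom ℝ) hunit
  have hxg : (A.submatrix f g).map (Int.castRingHom ℝ) *ᵥ (x ∘ g) =
      Int.castRingHom ℝ ∘ (b ∘ f) := by
    refine (A'.submatrix_mulVec_comp_of_eq_zero f hg fun j hj => ?_).trans
      (congrArg (· ∘ f) hext.1.1)
    by_contra hxj
    exact hj ⟨e.symm ⟨j, hxj⟩, by simp [g]⟩
  have hxint := eq_comp_nonsing_inv_mulVec_of_map_mulVec_eq _ hdet hxg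
  intro j
  by_cases hxj : x j = 0
  · exact ⟨0, by simp [hxj]⟩
  · exact ⟨_, by simpa [g] using congrFun hxint (e.symm ⟨j, hxj⟩)⟩
end

section
/- Ghouila-Houri-type sufficiency: if a matrix A with entries in {−1,0,1} has the property that every subset R of its rows can be partitioned into R₁ and R₂ such that for every column c, |∑_{r∈R₁} A_{rc} − ∑_{r∈R₂} A_{rc}| ≤ 1, then A is totally unimodular. -/
/-!
Induct on the size of a square submatrix `B`; it inherits the row-signing property. If
`det B ≠ 0`, the adjugate has entries in `{-1, 0, 1}` by induction, and a row `a` of it satisfies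
`a ᵥ* B = det B • e_j₀`. Sign the support of `a` equitably by `y`. Then `y ≡ a (mod 2)`, so
`y ᵥ* B` is even, hence zero, off `j₀`: `y ᵥ* B = s • e_j₀` with `|s| ≤ 1`. Multiplying by the
adjugate gives `det B • y = s • a`, and at a coordinate where `y = ±1` this reads
`|det B| = |s| * |a j| ≤ 1`.
-/

theorem Int.even_sub_of_abs_le_one {u v : ℤ} (hu : |u| ≤ 1) (hv : |v| ≤ 1)
    (h : u ≠ 0 ↔ v ≠ 0) : Even (u - v) := by
  rw [Int.even_iff]
  rw [abs_le] at hu hv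
  omega

theorem Int.mem_range_signType_cast_iff_abs_le_one {x : ℤ} :
    x ∈ Set.range SignType.cast ↔ |x| ≤ 1 := by
  rw [SignType.range_eq, abs_le]
  simp only [SignType.zero_eq_zero, SignType.neg_eq_neg_one, SignType.pos_eq_one,
    SignType.coe_zero, SignType.coe_neg, SignType.coe_one, Set.mem_insert_iff,
    Set.mem_singleton_iff]
  omega

namespace Matrix

variable {m m' n n' ι : Type*} [Fintype m] [Fintype m']

theorem adjugate_row_vecMul [Fintype ι] [DecidableEq ι] (B : Matrix ι ι ℤ) (j : ι) :
    B.adjugate j ᵥ* B = Pi.single j B.det := by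
  funext c
  have := congrFun (congrFun (adjugate_mul B) j) c
  simpa [mul_apply, vecMul, dotProduct, one_apply, Pi.single_apply, eq_comm] using this

/-- `y` encodes an equitable bicoloring `R = R₁ ∪ R₂` of the rows in `R`: it is `1` on `R₁`,
`-1` on `R₂` and `0` outside `R`. -/
def HasEquitableRowSignings (A : Matrix m n ℤ) : Prop :=
  ∀ R : Finset m, ∃ y : m → ℤ, (∀ i, |y i| ≤ 1) ∧ (∀ i, y i ≠ 0 ↔ i ∈ R) ∧ ∀ c, |(y ᵥ* A) c| ≤ 1

theorem hasEquitableRowSignings_of_forall_exists_partition [DecidableEq m] (A : Matrix m n ℤ)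
    (h : ∀ R : Finset m, ∃ R₁ R₂ : Finset m,
      R₁ ∪ R₂ = R ∧ Disjoint R₁ R₂ ∧ ∀ c, |∑ r ∈ R₁, A r c - ∑ r ∈ R₂, A r c| ≤ 1) :
    A.HasEquitableRowSignings := by
  intro R
  obtain ⟨R₁, R₂, rfl, hdisj, hbal⟩ := h R
  refine ⟨fun i ↦ (if i ∈ R₁ then 1 else 0) - (if i ∈ R₂ then 1 else 0), fun i ↦ ?_, fun i ↦ ?_,
    fun c ↦ by simpa [vecMul, dotProduct, sub_mul, Finset.sum_sub_distrib, ite_mul,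
      Finset.sum_ite_mem] using hbal c⟩
  all_goals
    have : i ∈ R₁ → i ∉ R₂ := fun hi ↦ Finset.disjoint_left.mp hdisj hi
    dsimp only
    split_ifs <;> simp_all

theorem HasEquitableRowSignings.submatrix {A : Matrix m n ℤ}
    (hA : A.HasEquitableRowSignings) {f : m' → m} (hf : f.Injective) (g : n' → n) :
    (A.submatrix f g).HasEquitableRowSignings := by
  intro R
  obtain ⟨y, hy_le, hy_supp, hy_bal⟩ := hA (R.map ⟨f, hf⟩)
  refine ⟨y ∘ f, fun i ↦ hy_le (f i), fun i ↦ by simpa using hy_supp (f i), fun c ↦ ?_⟩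
  have hy_range : ∀ r ∉ Set.range f, y r * A r (g c) = 0 := by
    intro r hr
    have : y r = 0 := by
      by_contra hne
      obtain ⟨i, -, rfl⟩ := Finset.mem_map.mp ((hy_supp r).mp hne)
      exact hr ⟨i, rfl⟩
    simp [this]
  have : (y ∘ f ᵥ* A.submatrix f g) c = (y ᵥ* A) (g c) :=
    Fintype.sum_of_injective f hf _ _ hy_range fun _ ↦ rfl
  exact this ▸ hy_bal (g c)

theorem HasEquitableRowSignings.abs_det_le_one [Fintype ι] [DecidableEq ι] {B : Matrix ι ι ℤ}
    (hB : B.HasEquitableRowSignings) (hadj : ∀ i j, |B.adjugate i j| ≤ 1) : |B.det| ≤ 1 := by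
  by_cases hdet : B.det = 0
  · simp [hdet]
  obtain hι | ⟨⟨j₀⟩⟩ := isEmpty_or_nonempty ι
  · simp
  set a := B.adjugate j₀
  have ha : a ᵥ* B = Pi.single j₀ B.det := adjugate_row_vecMul B j₀
  obtain ⟨y, hy_le, hy_supp, hy_bal⟩ := hB {i | a i ≠ 0}
  have hy_par : ∀ i, Even (y i - a i) := fun i ↦
    Int.even_sub_of_abs_le_one (hy_le i) (hadj j₀ i) (by simpa using hy_supp i)
  set s := (y ᵥ* B) j₀
  have hyB : y ᵥ* B = Pi.single j₀ s := by
    funext c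
    obtain rfl | hc := eq_or_ne c j₀
    · simp [s]
    have heven : Even ((y ᵥ* B) c) := by
      have : ((y - a) ᵥ* B) c = (y ᵥ* B) c := by simp [sub_vecMul, ha, hc]
      rw [← this]
      exact Finset.even_sum _ fun i _ ↦ (hy_par i).mul_right _
    have := hy_bal c
    rw [Int.even_iff] at heven
    rw [abs_le] at this
    simp only [Pi.single_apply, hc, if_false]
    omega
  have hy_adj : B.det • y = s • a :=
    calc B.det • y = y ᵥ* (B * B.adjugate) := by rw [mul_adjugate, vecMul_smul, vecMul_one]
      _ = (y ᵥ* B) ᵥ* B.adjugate := (vecMul_vecMul _ _ _).symm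
      _ = s • a := by rw [hyB, single_vecMul]; rfl
  obtain ⟨j, hj⟩ : ∃ j, a j ≠ 0 := by
    by_contra! ha0
    have : a = 0 := funext ha0
    simpa [this, eq_comm, hdet] using congrFun ha j₀
  have hyj : |y j| = 1 := by
    have hyj_ne : y j ≠ 0 := (hy_supp j).mpr (by simpa using hj)
    have := hy_le j
    rw [abs_le] at this
    rw [abs_eq zero_le_one]
    omega
  calc |B.det| = |B.det * y j| := by rw [abs_mul, hyj, mul_one]
    _ = |s| * |a j| := by rw [← abs_mul]; exact congrArg _ (congrFun hy_adj j)
    _ ≤ 1 := by nlinarith [hy_bal j₀, hadj j₀ j, abs_nonneg s, abs_nonneg (a j)]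

theorem HasEquitableRowSignings.isTotallyUnimodular {A : Matrix m n ℤ}
    (hA : A.HasEquitableRowSignings) : A.IsTotallyUnimodular := by
  suffices ∀ k (f : Fin k → m) (g : Fin k → n), f.Injective → g.Injective →
      |(A.submatrix f g).det| ≤ 1 from
    fun k f g hf hg ↦ Int.mem_range_signType_cast_iff_abs_le_one.mpr (this k f g hf hg)
  intro k
  induction k with
  | zero => simp
  | succ k ih =>
    intro f g hf hg
    refine (hA.submatrix hf g).abs_det_le_one fun i j ↦ ?_
    rw [adjugate_fin_succ_eq_det_submatrix, abs_mul, abs_pow, abs_neg, abs_one, one_pow, one_mul,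
      submatrix_submatrix]
    exact ih _ _ (hf.comp Fin.succAbove_right_injective) (hg.comp Fin.succAbove_right_injective)

end Matrix

theorem stmt_9_general {m n : ℕ} (A : Matrix (Fin m) (Fin n) ℤ)
    (h : ∀ R : Finset (Fin m), ∃ R₁ R₂ : Finset (Fin m),
      R₁ ∪ R₂ = R ∧ Disjoint R₁ R₂ ∧
      ∀ c, |∑ r ∈ R₁, A r c - ∑ r ∈ R₂, A r c| ≤ 1) :
    ∀ (t : ℕ) (f : Fin t → Fin m) (g : Fin t → Fin n),
      Function.Injective f → Function.Injective g →
      (A.submatrix f g).det ∈ ({-1, 0, 1} : Set ℤ) := by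
  intro t f g hf hg
  have hTU := (Matrix.hasEquitableRowSignings_of_forall_exists_partition A h).isTotallyUnimodular
  have hdet := Int.mem_range_signType_cast_iff_abs_le_one.mp (hTU t f g hf hg)
  rw [abs_le] at hdet
  simp only [Set.mem_insert_iff, Set.mem_singleton_iff]
  omega

theorem stmt_9 {m n : ℕ} (A : Matrix (Fin m) (Fin n) ℤ)
    (hent : ∀ i j, A i j ∈ ({-1, 0, 1} : Set ℤ))
    (h : ∀ R : Finset (Fin m), ∃ R₁ R₂ : Finset (Fin m),
      R₁ ∪ R₂ = R ∧ Disjoint R₁ R₂ ∧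
      ∀ c, |∑ r ∈ R₁, A r c - ∑ r ∈ R₂, A r c| ≤ 1) :
    ∀ (t : ℕ) (f : Fin t → Fin m) (g : Fin t → Fin n),
      Function.Injective f → Function.Injective g →
      (A.submatrix f g).det ∈ ({-1, 0, 1} : Set ℤ) :=
  stmt_9_general A h
end

section
/- The constraint matrix of the fair top-k assignment LP is totally unimodular. Concretely: let the variables be x_{ij} for i ∈ {1,...,d} and j ∈ {1,...,k}, and let A be the 0/±1 matrix whose rows are (1) for each i the row of the constraint ∑_j x_{ij} ≤ 1, (2) for each j the row of ∑_i x_{ij} = 1, (3) for each group G_a of a partition of {1,...,d} the row of ∑_{i∈G_a} ∑_j x_{ij} ≥ ℓ_a, and (4) for each group G_a the row of ∑_{i∈G_a} ∑_j x_{ij} ≤ u_a. Then A is totally unimodular. -/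
/-!
Each row of `fairMatrix` is, up to sign, a row of the 0/1 matrix with one row per item, per
position and per group, so it is enough that this matrix is totally unimodular. In a square
submatrix of it, subtract from every chosen group row the chosen item rows of that group; this is
left multiplication by `1 + N` with `N * N = 0`, so the determinant changes only by a unit. After
the subtraction every column has at most one `1` among the position rows and at most one among
the item and group rows. For such a two-coloured 0/1 matrix either some column has at most one
nonzero entry, and Laplace expansion along it reduces the size, or every column has exactly one
`1` of each colour, and the rows of one colour minus those of the other sum to zero.
-/

/-- The constraint matrix of the fair top-k assignment LP.  Rows: `Sum.inl i` for the
constraints `∑_j x_{ij} ≤ 1`; `Sum.inr (Sum.inl j)` for `∑_i x_{ij} = 1`;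
`Sum.inr (Sum.inr (Sum.inl a))` for the lower fairness constraint of group `a`
(written as `-∑_{i ∈ G_a} ∑_j x_{ij} ≤ -ℓ_a`); and `Sum.inr (Sum.inr (Sum.inr a))`
for the upper fairness constraint of group `a`.  The group partition is given by the
assignment `G : Fin d → Fin g`. -/
def fairMatrix (d k g : ℕ) (G : Fin d → Fin g) :
    Matrix (Fin d ⊕ Fin k ⊕ Fin g ⊕ Fin g) (Fin d × Fin k) ℤ :=
  fun r c =>
    match r with
    | Sum.inl i => if c.1 = i then 1 else 0
    | Sum.inr (Sum.inl j) => if c.2 = j then 1 else 0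
    | Sum.inr (Sum.inr (Sum.inl a)) => if G c.1 = a then -1 else 0
    | Sum.inr (Sum.inr (Sum.inr a)) => if G c.1 = a then 1 else 0

namespace Matrix

variable {m m' n R : Type*} [CommRing R]

lemma IsTotallyUnimodular.of_rows_eq_smul {A : Matrix m n R} {B : Matrix m' n R}
    (hA : A.IsTotallyUnimodular) (hB : ∀ i, ∃ (s : SignType) (i₀ : m), B i = (s : R) • A i₀) :
    B.IsTotallyUnimodular := by
  choose s e hB using hB
  intro k f g _ _
  have hsub : B.submatrix f g = of fun x y => (s (f x) : R) * A.submatrix (e ∘ f) g x y := by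
    ext x y
    simp [hB]
  obtain ⟨σ, hσ⟩ := (isTotallyUnimodular_iff A).1 hA k (e ∘ f) g
  rw [hsub, det_mul_column, ← hσ]
  refine ⟨(∏ x, s (f x)) * σ, ?_⟩
  rw [SignType.coe_mul]
  exact congrArg (· * _) (map_prod SignType.castHom _ _)

variable [IsDomain R]

theorem det_mem_range_of_twoColoring {t : ℕ} (M : Matrix (Fin t) (Fin t) R)
    (hM : ∀ i j, M i j = 0 ∨ M i j = 1) (p : Fin t → Bool)
    (hp : ∀ j i i', p i = p i' → M i j ≠ 0 → M i' j ≠ 0 → i = i') :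
    M.det ∈ Set.range SignType.cast := by
  induction t with
  | zero => exact ⟨1, by simp⟩
  | succ t ih =>
    by_cases hcol : ∃ j, ∀ i i', M i j ≠ 0 → M i' j ≠ 0 → i = i'
    · obtain ⟨j, hj⟩ := hcol
      obtain ⟨i, hi⟩ : ∃ i, ∀ i', i' ≠ i → M i' j = 0 := by
        by_cases h : ∃ i, M i j ≠ 0
        · obtain ⟨i, hi⟩ := h
          exact ⟨i, fun i' hne => by_contra fun h' => hne (hj i' i h' hi)⟩
        · push Not at h
          exact ⟨0, fun i' _ => h i'⟩
      rw [det_succ_column M j, Fintype.sum_eq_single i (fun i' hne => by simp [hi i' hne])]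
      obtain ⟨σ, hσ⟩ := ih (M.submatrix i.succAbove j.succAbove) (fun _ _ => hM _ _)
        (p ∘ i.succAbove) fun _ _ _ hpp h h' => Fin.succAbove_right_injective (hp _ _ _ hpp h h')
      rcases hM i j with h0 | h1
      · exact ⟨0, by simp [h0]⟩
      · exact ⟨(-1) ^ (i + j : ℕ) * σ, by simp [h1, hσ]⟩
    · push Not at hcol
      refine ⟨0, Eq.symm ?_⟩
      rw [SignType.coe_zero, ← exists_vecMul_eq_zero_iff]
      refine ⟨fun i => if p i then 1 else -1,
        fun h => by have := congrFun h 0; split_ifs at this <;> simp at this, ?_⟩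
      funext j
      obtain ⟨i, i', hi, hi', hne⟩ := hcol j
      have hpp : p i' = !p i := by
        have := mt (hp j i i') (by simp [hi, hi', hne])
        revert this; cases p i <;> cases p i' <;> simp
      have hrest : ∀ x, x ≠ i ∧ x ≠ i' → (if p x then (1 : R) else -1) * M x j = 0 := by
        rintro x ⟨hxi, hxi'⟩
        by_contra hx
        have hx := right_ne_zero_of_mul hx
        have hpx : p x = p i ∨ p x = p i' := by rw [hpp]; cases p x <;> cases p i <;> simp
        rcases hpx with hpx | hpx
        · exact hxi (hp j x i hpx hx hi)
        · exact hxi' (hp j x i' hpx hx hi')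
      simp only [vecMul, dotProduct, Pi.zero_apply]
      rw [Fintype.sum_eq_add i i' hne hrest, (hM i j).resolve_left hi,
        (hM i' j).resolve_left hi', hpp]
      cases p i <;> simp

theorem isTotallyUnimodular_of_twoColoring (A : Matrix m n R) (hA : ∀ i j, A i j = 0 ∨ A i j = 1)
    (p : m → Bool) (hp : ∀ j i i', p i = p i' → A i j ≠ 0 → A i' j ≠ 0 → i = i') :
    A.IsTotallyUnimodular :=
  fun _ f _ hf _ => det_mem_range_of_twoColoring _ (fun _ _ => hA _ _) (p ∘ f)
    fun _ _ _ hpp h h' => hf (hp _ _ _ hpp h h')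

end Matrix

namespace FairTopK

open Matrix

variable {α β γ : Type*} [DecidableEq α] [DecidableEq β] [DecidableEq γ] (G : α → γ)

def assignmentMatrix : Matrix (α ⊕ β ⊕ γ) (α × β) ℤ := fun r c =>
  match r with
  | .inl i => if c.1 = i then 1 else 0
  | .inr (.inl j) => if c.2 = j then 1 else 0
  | .inr (.inr a) => if G c.1 = a then 1 else 0

open Classical in
/-- `assignmentMatrix` with the item rows indexed by `I` subtracted from the row of their group. -/
noncomputable def reducedAssignmentMatrix (I : Set α) : Matrix (α ⊕ β ⊕ γ) (α × β) ℤ :=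
  fun r c =>
    match r with
    | .inl i => if c.1 = i then 1 else 0
    | .inr (.inl j) => if c.2 = j then 1 else 0
    | .inr (.inr a) => if G c.1 = a ∧ c.1 ∉ I then 1 else 0

def groupItemMatrix : Matrix (α ⊕ β ⊕ γ) (α ⊕ β ⊕ γ) ℤ := fun r r' =>
  match r' with
  | .inl i => if r = .inr (.inr (G i)) then 1 else 0
  | .inr _ => 0

def isPositionRow : α ⊕ β ⊕ γ → Bool
  | .inr (.inl _) => true
  | _ => false

variable {ι ι' : Type*} [Fintype ι]

lemma groupItemMatrix_submatrix_mul_self [DecidableEq ι] (f : ι → α ⊕ β ⊕ γ) :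
    (groupItemMatrix G).submatrix f f * (groupItemMatrix G).submatrix f f = 0 := by
  ext x z
  refine Finset.sum_eq_zero fun y _ => ?_
  rcases hfy : f y with i | _ <;> rcases hfz : f z with _ | _ <;>
    simp [groupItemMatrix, hfy, hfz]

lemma sum_groupItemMatrix_mul_reducedAssignmentMatrix (f : ι → α ⊕ β ⊕ γ)
    (hf : Function.Injective f) (r : α ⊕ β ⊕ γ) (c : α × β) :
    ∑ y, groupItemMatrix G r (f y) * reducedAssignmentMatrix G {i | ∃ y, f y = .inl i} (f y) c =
      if ∃ y, f y = .inl c.1 then (if r = .inr (.inr (G c.1)) then 1 else 0) else 0 := by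
  rw [← Fintype.sum_ite_eq_ite_exists _ fun y y' hy hy' => hf (hy.trans hy'.symm)]
  refine Finset.sum_congr rfl fun y _ => ?_
  rcases hfy : f y with i | _
  · by_cases hi : c.1 = i
    · subst hi
      simp [groupItemMatrix, reducedAssignmentMatrix]
    · simp [groupItemMatrix, reducedAssignmentMatrix, hi, Ne.symm hi]
  · simp [groupItemMatrix]

lemma submatrix_assignmentMatrix_eq [DecidableEq ι] (f : ι → α ⊕ β ⊕ γ)
    (hf : Function.Injective f) (h : ι' → α × β) :
    (assignmentMatrix G).submatrix f h = (1 + (groupItemMatrix G).submatrix f f) *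
      (reducedAssignmentMatrix G {i | ∃ y, f y = .inl i}).submatrix f h := by
  rw [Matrix.add_mul, Matrix.one_mul]
  ext x c
  simp only [Matrix.add_apply, mul_apply, submatrix_apply,
    sum_groupItemMatrix_mul_reducedAssignmentMatrix G f hf]
  rcases hfx : f x with i | j | a
  · simp [assignmentMatrix, reducedAssignmentMatrix]
  · simp [assignmentMatrix, reducedAssignmentMatrix]
  · by_cases hI : ∃ y, f y = .inl (h c).1 <;> by_cases ha : G (h c).1 = a
    all_goals simp [assignmentMatrix, reducedAssignmentMatrix, hI, ha, eq_comm (a := a)]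

lemma reducedAssignmentMatrix_submatrix_isTotallyUnimodular (f : ι' → α ⊕ β ⊕ γ)
    (hf : Function.Injective f) :
    ((reducedAssignmentMatrix G {i | ∃ y, f y = .inl i}).submatrix f id).IsTotallyUnimodular := by
  refine isTotallyUnimodular_of_twoColoring _ (fun x c => ?_) (isPositionRow ∘ f) ?_
  · rcases hfx : f x with i | j | a <;>
      simp only [submatrix_apply, reducedAssignmentMatrix, id, hfx] <;> split_ifs <;> simp
  · intro c x x' hpp hx hx'
    apply hf
    rcases hfx : f x with i | j | a <;> rcases hfx' : f x' with i' | j' | a' <;>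
      simp_all [reducedAssignmentMatrix, isPositionRow]

theorem assignmentMatrix_isTotallyUnimodular :
    (assignmentMatrix (β := β) G).IsTotallyUnimodular := by
  intro t f h hf hh
  have hunit : IsUnit (1 + (groupItemMatrix G).submatrix f f).det := by
    refine isUnit_det_of_right_inverse (B := 1 - (groupItemMatrix G).submatrix f f) ?_
    rw [add_mul, one_mul, mul_sub, mul_one, groupItemMatrix_submatrix_mul_self, sub_zero,
      sub_add_cancel]
  obtain ⟨σ, hσ⟩ := reducedAssignmentMatrix_submatrix_isTotallyUnimodular G f hf t id h
    Function.injective_id hh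
  rw [submatrix_assignmentMatrix_eq G f hf, det_mul]
  rcases Int.isUnit_iff.1 hunit with hu | hu
  · exact ⟨σ, by rw [hu, one_mul, hσ]; rfl⟩
  · exact ⟨-σ, by rw [hu, SignType.coe_neg, hσ, neg_one_mul]; rfl⟩

lemma fairMatrix_row_eq_smul (d k g : ℕ) (G : Fin d → Fin g)
    (r : Fin d ⊕ Fin k ⊕ Fin g ⊕ Fin g) :
    ∃ (s : SignType) (r₀ : Fin d ⊕ Fin k ⊕ Fin g),
      fairMatrix d k g G r = (s : ℤ) • assignmentMatrix G r₀ := by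
  rcases r with i | j | a | a
  · exact ⟨1, .inl i, by ext c; simp [fairMatrix, assignmentMatrix]⟩
  · exact ⟨1, .inr (.inl j), by ext c; simp [fairMatrix, assignmentMatrix]⟩
  · exact ⟨-1, .inr (.inr a), by ext c; simp [fairMatrix, assignmentMatrix]⟩
  · exact ⟨1, .inr (.inr a), by ext c; simp [fairMatrix, assignmentMatrix]⟩

end FairTopK

theorem stmt_10 (d k g : ℕ) (G : Fin d → Fin g) :
    ∀ (t : ℕ) (f : Fin t → Fin d ⊕ Fin k ⊕ Fin g ⊕ Fin g) (h : Fin t → Fin d × Fin k),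
      Function.Injective f → Function.Injective h →
      ((fairMatrix d k g G).submatrix f h).det ∈ ({-1, 0, 1} : Set ℤ) := by
  intro t f h hf hh
  have hTU : (fairMatrix d k g G).IsTotallyUnimodular :=
    (FairTopK.assignmentMatrix_isTotallyUnimodular G).of_rows_eq_smul
      (FairTopK.fairMatrix_row_eq_smul d k g G)
  have hdet := hTU t f h hf hh
  rw [SignType.range_eq] at hdet
  simpa [Set.insert_comm] using hdet
end

section
/- For every subset R of the rows of the fair top-k assignment constraint matrix A, there exists a partition of R into R₁ and R₂ such that for every column c, |∑_{r∈R₁} A_{rc} − ∑_{r∈R₂} A_{rc}| ≤ 1. -/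
open Finset

section FairMatrix

variable {d k g : ℕ} (G : Fin d → Fin g)

theorem fairMatrix_apply (r : Fin d ⊕ Fin k ⊕ Fin g ⊕ Fin g) (c : Fin d × Fin k) :
    fairMatrix d k g G r c =
      (if r = Sum.inl c.1 then 1 else 0) + (if r = Sum.inr (Sum.inl c.2) then 1 else 0)
        - (if r = Sum.inr (Sum.inr (Sum.inl (G c.1))) then 1 else 0)
        + (if r = Sum.inr (Sum.inr (Sum.inr (G c.1))) then 1 else 0) := by
  rcases r with i | j | a | a <;> simp [fairMatrix, eq_comm, neg_ite]

theorem sum_fairMatrix_apply (S : Finset (Fin d ⊕ Fin k ⊕ Fin g ⊕ Fin g)) (c : Fin d × Fin k) :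
    ∑ r ∈ S, fairMatrix d k g G r c =
      (if Sum.inl c.1 ∈ S then 1 else 0) + (if Sum.inr (Sum.inl c.2) ∈ S then 1 else 0)
        - (if Sum.inr (Sum.inr (Sum.inl (G c.1))) ∈ S then 1 else 0)
        + (if Sum.inr (Sum.inr (Sum.inr (G c.1))) ∈ S then 1 else 0) := by
  simp only [fairMatrix_apply, sum_add_distrib, sum_sub_distrib, sum_ite_eq']

/-- The side (`true` for `R₁`) of a row of `R`. Upper rows go to `R₁` and a lower row joins its
upper row if that is in `R`, so in every column `(i, j)` the rows of the group `G i` contribute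
`1` to `∑ R₁ - ∑ R₂` when exactly one of them is in `R`, and `0` otherwise; the row of `i` is put
on the side that cancels this, and the row of `j`, sent to `R₂`, contributes `0` or `-1`. -/
def fairSide (R : Finset (Fin d ⊕ Fin k ⊕ Fin g ⊕ Fin g)) :
    Fin d ⊕ Fin k ⊕ Fin g ⊕ Fin g → Bool
  | Sum.inl i =>
    decide (Sum.inr (Sum.inr (Sum.inl (G i))) ∈ R ↔ Sum.inr (Sum.inr (Sum.inr (G i))) ∈ R)
  | Sum.inr (Sum.inl _) => false
  | Sum.inr (Sum.inr (Sum.inl a)) => decide (Sum.inr (Sum.inr (Sum.inr a)) ∈ R)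
  | Sum.inr (Sum.inr (Sum.inr _)) => true

theorem abs_sum_fairSide_sub_le_one (R : Finset (Fin d ⊕ Fin k ⊕ Fin g ⊕ Fin g))
    (c : Fin d × Fin k) :
    |∑ r ∈ R.filter (fairSide G R ·), fairMatrix d k g G r c
        - ∑ r ∈ R.filter (¬ fairSide G R ·), fairMatrix d k g G r c| ≤ 1 := by
  simp only [sum_fairMatrix_apply, mem_filter]
  by_cases hi : Sum.inl c.1 ∈ R <;> by_cases hj : Sum.inr (Sum.inl c.2) ∈ R <;>
    by_cases hl : Sum.inr (Sum.inr (Sum.inl (G c.1))) ∈ R <;>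
    by_cases hu : Sum.inr (Sum.inr (Sum.inr (G c.1))) ∈ R <;>
    simp [fairSide, hi, hj, hl, hu]

end FairMatrix

theorem stmt_11 (d k g : ℕ) (G : Fin d → Fin g)
    (R : Finset (Fin d ⊕ Fin k ⊕ Fin g ⊕ Fin g)) :
    ∃ R₁ R₂ : Finset (Fin d ⊕ Fin k ⊕ Fin g ⊕ Fin g),
      R₁ ∪ R₂ = R ∧ Disjoint R₁ R₂ ∧
      ∀ c : Fin d × Fin k,
        |∑ r ∈ R₁, fairMatrix d k g G r c - ∑ r ∈ R₂, fairMatrix d k g G r c| ≤ 1 := by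
  exact ⟨_, _, filter_union_filter_not_eq _ R, disjoint_filter_filter_not R R _,
    abs_sum_fairSide_sub_le_one G R⟩
end
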